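/- For all real numbers s, s' and all θ with 0 ≤ θ < 1, one has ⟨s'⟩/⟨s⟩ ≤ 4^{1/(1-θ)} · ⟨ |s'-s| / ⟨s'⟩^θ ⟩^{1/(1-θ)}, where ⟨x⟩ := (1+x²)^{1/2}. -/

import Mathlib

/-- The Japanese bracket `⟨s⟩ = (1+s²)^{1/2}`. -/
noncomputable def jb (s : ℝ) : ℝ := Real.sqrt (1 + s ^ 2)

/-!
`⟨s⟩` is the modulus of `1 + s i`, so it is `1`-Lipschitz, and `⟨s'⟩ ≤ 2⟨s⟩` unless
`|s' - s| ≥ ⟨s'⟩ / 2`. In the first case the ratio is at most `2`; in the second,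
`⟨s'⟩^{1-θ} ≤ 2 |s' - s| / ⟨s'⟩^θ`, and raising to the power `1/(1-θ)` bounds `⟨s'⟩`,
hence the ratio, since `⟨s⟩ ≥ 1`.
-/

open Complex in
theorem jb_eq_norm (s : ℝ) : jb s = ‖(1 + s * I : ℂ)‖ := by
  simp [jb, norm_def, normSq_apply, sq]

theorem one_le_jb (s : ℝ) : 1 ≤ jb s := by
  simpa [jb_eq_norm] using Complex.abs_re_le_norm (1 + s * Complex.I)

theorem abs_le_jb (s : ℝ) : |s| ≤ jb s := by
  simpa [jb_eq_norm] using Complex.abs_im_le_norm (1 + s * Complex.I)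

open Complex in
theorem jb_le_jb_add_abs_sub (s s' : ℝ) : jb s' ≤ jb s + |s' - s| := by
  have hdiff : (1 + s' * I) - (1 + s * I) = ((s' - s : ℝ) : ℂ) * I := by push_cast; ring
  have := norm_le_norm_add_norm_sub' (1 + s' * I) (1 + s * I)
  rwa [hdiff, norm_mul, norm_I, mul_one, norm_real, Real.norm_eq_abs, ← jb_eq_norm,
    ← jb_eq_norm] at this

theorem jb_le_two_mul_abs_sub {s s' : ℝ} (h : 2 * jb s < jb s') : jb s' ≤ 2 * |s' - s| := by
  linarith [jb_le_jb_add_abs_sub s s']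

theorem le_rpow_one_div_one_sub {a d θ : ℝ} (ha : 0 < a) (had : a ≤ 2 * d) (hθ : θ < 1) :
    a ≤ (2 * d / a ^ θ) ^ (1 / (1 - θ)) := by
  have hd : 0 ≤ 2 * d := ha.le.trans had
  rw [one_div, Real.le_rpow_inv_iff_of_pos ha.le (by positivity) (by linarith),
    Real.rpow_sub ha, Real.rpow_one]
  gcongr

theorem jb_ratio_theta (s s' θ : ℝ) (hθ0 : 0 ≤ θ) (hθ1 : θ < 1) :
    jb s' / jb s ≤ (4 : ℝ) ^ (1 / (1 - θ)) * jb (|s' - s| / jb s' ^ θ) ^ (1 / (1 - θ)) := by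
  set y := jb (|s' - s| / jb s' ^ θ)
  have hy : 1 ≤ y := one_le_jb _
  have he : 1 ≤ 1 / (1 - θ) := by rw [le_div_iff₀ (by linarith)]; linarith
  have hs := one_le_jb s
  have hs' := one_le_jb s'
  rw [← Real.mul_rpow (by norm_num) (by positivity)]
  rcases le_or_gt (jb s') (2 * jb s) with hclose | hfar
  · calc jb s' / jb s ≤ 2 := by rw [div_le_iff₀ (by positivity)]; linarith
      _ ≤ 4 * y := by linarith
      _ ≤ (4 * y) ^ (1 / (1 - θ)) := Real.self_le_rpow_of_one_le (by linarith) he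
  · calc jb s' / jb s ≤ jb s' := div_le_self (by positivity) hs
      _ ≤ (2 * |s' - s| / jb s' ^ θ) ^ (1 / (1 - θ)) :=
        le_rpow_one_div_one_sub (by positivity) (jb_le_two_mul_abs_sub hfar) hθ1
      _ ≤ (4 * y) ^ (1 / (1 - θ)) := by
        gcongr
        rw [mul_div_assoc]
        linarith [(le_abs_self _).trans (abs_le_jb (|s' - s| / jb s' ^ θ))]
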